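/- arXiv:2009.14121 — 2 statements merged into one kernel-verified Lean document; each statement's English description precedes it below -/
import Mathlib

section
/- Let G : ℕ → ℂ be multiplicative with only finitely many bad primes, and suppose that the series S_G(1) = Σ_{q=1}^∞ G(q)·μ(q) converges. Then the following four conditions are equivalent: (1) R_G(a) converges for every a ∈ ℕ; (2) R_G(a) converges for every divisor a of N(G); (3) S_G(N(G)) converges; (4) S_G(b) converges for every b ∈ ℕ not divisible by any hyperbad prime of G. -/
/-!
Write `S_F(P; y) = ∑_{K ≤ y, (K, P) = 1} F(K) μ(K)`. Kluyver's formula gives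
`R_G(a, x) = ∑_{d ∣ a} d · S_{G(d·)}(1; x / d)`, so by Möbius-type triangular inversion `R_G(a)`
converges for all `a ∣ n` iff the twisted series `S_{G(d·)}(1)` converge for all `d ∣ n`.

Splitting the summation by whether a prime `p ∤ P` divides `K` gives, for `p ∤ d`,
`S_{G(p^e d·)}(P; y) = G(p^e) S_{G(d·)}(pP; y) - G(p^{e+1}) S_{G(d·)}(pP; y / p)`.
When `G(p^{e+1}) = G(p^e) G(p)` the right side collapses to `G(p^e) S_{G(d·)}(P; y)`, so a hyperbad
prime can be stripped from `d` without touching `P`. Otherwise the cases `e = 0` and `e = w_p` can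
be solved for `S_{G(d·)}(pP; y / p)`: convergence at `d` and `p^{w_p} d` moves a simply bad `p`
into the modulus; this is why `N(G)` suffices. Any prime may be dropped from the modulus (`e = 0`),
and a prime that is not bad may be added to it: the recursion
`S(pP; y) = S(P; y) + G(p) S(pP; y / p)` unrolls downwards into `∑ G(p)^j S(P; y / p^j)` when
`|G(p)| < 1`, and upwards, using `S(pP; y) = O(y)` from the convergence of `S_G(1)`, when
`|G(p)| > p`; in both cases dominated convergence gives the limit `S_G(P) / (1 - G(p))`.
-/

open Filter Finset

noncomputable def mu (n : ℕ) : ℂ := ((ArithmeticFunction.moebius n : ℤ) : ℂ)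

/-- Ramanujan sum `c_q(a) = ∑_{d ∣ gcd(q,a)} d · μ(q/d)` (Kluyver's formula). -/
noncomputable def cR (q a : ℕ) : ℂ :=
  ∑ d ∈ (Nat.gcd q a).divisors, (d : ℂ) * mu (q / d)

/-- Partial sum of the Ramanujan series `R_G(a,x) = ∑_{q ≤ x} G(q) c_q(a)`. -/
noncomputable def RS (G : ℕ → ℂ) (a : ℕ) (x : ℝ) : ℂ :=
  ∑ q ∈ Finset.Icc 1 ⌊x⌋₊, G q * cR q a

/-- Partial sum of the coprime series `S_G(a,x) = ∑_{r ≤ x, (r,a)=1} G(r) μ(r)`. -/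
noncomputable def SS (G : ℕ → ℂ) (a : ℕ) (x : ℝ) : ℂ :=
  ∑ r ∈ (Finset.Icc 1 ⌊x⌋₊).filter fun r => Nat.gcd r a = 1, G r * mu r

/-- Partial sum of the Lucht series `L_G(d,x) = ∑_{K ≤ x} μ(K) G(dK)`. -/
noncomputable def LS (G : ℕ → ℂ) (d : ℕ) (x : ℝ) : ℂ :=
  ∑ K ∈ Finset.Icc 1 ⌊x⌋₊, mu K * G (d * K)

def RTendsto (G : ℕ → ℂ) (a : ℕ) (L : ℂ) : Prop :=
  Tendsto (fun x : ℝ => RS G a x) atTop (nhds L)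

def RConv (G : ℕ → ℂ) (a : ℕ) : Prop := ∃ L, RTendsto G a L

def STendsto (G : ℕ → ℂ) (a : ℕ) (L : ℂ) : Prop :=
  Tendsto (fun x : ℝ => SS G a x) atTop (nhds L)

def SConv (G : ℕ → ℂ) (a : ℕ) : Prop := ∃ L, STendsto G a L

def LTendsto (G : ℕ → ℂ) (d : ℕ) (L : ℂ) : Prop :=
  Tendsto (fun x : ℝ => LS G d x) atTop (nhds L)

def LConv (G : ℕ → ℂ) (d : ℕ) : Prop := ∃ L, LTendsto G d L

/-- `G` is multiplicative: `G(ab) = G(a)G(b)` for coprime positive `a, b`. -/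
def IsMult (G : ℕ → ℂ) : Prop :=
  ∀ a b : ℕ, 0 < a → 0 < b → Nat.Coprime a b → G (a * b) = G a * G b

/-- `G` is completely multiplicative. -/
def IsCM (G : ℕ → ℂ) : Prop :=
  ∀ a b : ℕ, 0 < a → 0 < b → G (a * b) = G a * G b

/-- The completely multiplicative index `w_{p,G}`: the largest `w ∈ ℕ` with
`G(p^k) = G(p)^k` for all `1 ≤ k ≤ w`, and `⊤` if this holds for all `k`. -/
noncomputable def cmIndex (G : ℕ → ℂ) (p : ℕ) : ℕ∞ :=
  ⨆ w ∈ {n : ℕ | ∀ k : ℕ, 1 ≤ k → k ≤ n → G (p ^ k) = G p ^ k}, (w : ℕ∞)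

/-- The transparency index `v_{p,G}`: least `K ≥ 0` with `G(p^{K+1}) ≠ 1`, or `⊤`. -/
noncomputable def trIdx (G : ℕ → ℂ) (p : ℕ) : ℕ∞ :=
  ⨅ K ∈ {K : ℕ | G (p ^ (K + 1)) ≠ 1}, (K : ℕ∞)

/-- A prime `p` is bad for `G` iff `1 ≤ |G(p)| ≤ p`. -/
def IsBad (G : ℕ → ℂ) (p : ℕ) : Prop :=
  1 ≤ ‖G p‖ ∧ ‖G p‖ ≤ p

def IsHyperbad (G : ℕ → ℂ) (p : ℕ) : Prop :=
  p.Prime ∧ IsBad G p ∧ cmIndex G p = ⊤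

def IsSimplyBad (G : ℕ → ℂ) (p : ℕ) : Prop :=
  p.Prime ∧ IsBad G p ∧ cmIndex G p ≠ ⊤

def IsSimplyTransparent (G : ℕ → ℂ) (p : ℕ) : Prop :=
  p.Prime ∧ G p = 1 ∧ cmIndex G p ≠ ⊤

/-- The Ramanujan conductor `N(G) = ∏_{p simply bad} p^{w_{p,G}}`. -/
noncomputable def ramCond (G : ℕ → ℂ) : ℕ :=
  ∏ᶠ p ∈ {p : ℕ | IsSimplyBad G p}, p ^ (cmIndex G p).toNat

/-- The transparency conductor `N_T(G) = ∏_{p simply transparent} p^{v_{p,G}}`. -/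
noncomputable def transpCond (G : ℕ → ℂ) : ℕ :=
  ∏ᶠ p ∈ {p : ℕ | IsSimplyTransparent G p}, p ^ (trIdx G p).toNat

/-- The squarefree radical of `n`. -/
def rad (n : ℕ) : ℕ := ∏ p ∈ n.primeFactors, p

/-- Euler–Ramanujan factor `E_G(a) = ∑_{d ∣ a·rad a} G(d) c_d(a)`. -/
noncomputable def EG (G : ℕ → ℂ) (a : ℕ) : ℂ := ∑ d ∈ (a * rad a).divisors, G d * cR d a

/-- `C_G(a) = ∑_{d ∣ a} G(d) μ(d)`. -/
noncomputable def CGsum (G : ℕ → ℂ) (a : ℕ) : ℂ := ∑ d ∈ a.divisors, G d * mu d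

/-- `D_G(a) = ∑_{d ∣ a} G(d) d`. -/
noncomputable def DGsum (G : ℕ → ℂ) (a : ℕ) : ℂ := ∑ d ∈ a.divisors, G d * (d : ℂ)

/-- `U_G(a) = ∑_{d ∣ a} μ(d) G(da)`. -/
noncomputable def UGsum (G : ℕ → ℂ) (a : ℕ) : ℂ := ∑ d ∈ a.divisors, mu d * G (d * a)

/-- Eratosthenes transform `F' = F ∗ μ`. -/
noncomputable def eratos (F : ℕ → ℂ) (n : ℕ) : ℂ := ∑ d ∈ n.divisors, F d * mu (n / d)

/-- The canonical Ramanujan coefficient of `F`: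
`G_F(q) = ∏_{p ∣ q} (1 - ∑_{K=0}^{v_p(q)-1} F'(p^K)/p^K)`. -/
noncomputable def canonCoeff (F : ℕ → ℂ) (q : ℕ) : ℂ :=
  ∏ p ∈ q.primeFactors,
    (1 - ∑ K ∈ Finset.range (q.factorization p), eratos F (p ^ K) / ((p : ℂ) ^ K))

/-- The opacity core `H_G(q) = G(q·N_T(G))·μ(q)²`. -/
noncomputable def opacityCore (G : ℕ → ℂ) (q : ℕ) : ℂ :=
  G (q * transpCond G) * mu q ^ 2

open scoped Topology

lemma tendsto_comp_div_const_iff {α : Type*} {f : ℝ → α} {l : Filter α} {c : ℝ} (hc : 0 < c) :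
    Tendsto (fun y => f (y / c)) atTop l ↔ Tendsto f atTop l := by
  refine ⟨fun h => ?_, fun h => h.comp (tendsto_id.atTop_div_const hc)⟩
  simpa [Function.comp_def, hc.ne'] using h.comp (tendsto_id.atTop_mul_const hc)

lemma exists_tendsto_sum {ι : Type*} {s : Finset ι} {f : ι → ℝ → ℂ}
    (h : ∀ i ∈ s, ∃ L, Tendsto (f i) atTop (𝓝 L)) :
    ∃ L, Tendsto (fun y => ∑ i ∈ s, f i y) atTop (𝓝 L) := by
  choose! L hL using h
  exact ⟨_, tendsto_finsetSum s hL⟩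

lemma tendsto_tsum_mul_comp {f : ℝ → ℂ} {L : ℂ} {C : ℝ} (hfC : ∀ y, ‖f y‖ ≤ C)
    (hf : Tendsto f atTop (𝓝 L)) {a : ℕ → ℂ} (ha : Summable (‖a ·‖)) {φ : ℕ → ℝ → ℝ}
    (hφ : ∀ j, Tendsto (φ j) atTop atTop) :
    Tendsto (fun y => ∑' j, a j * f (φ j y)) atTop (𝓝 ((∑' j, a j) * L)) := by
  rw [← tsum_mul_right]
  refine tendsto_tsum_of_dominated_convergence (bound := fun j => ‖a j‖ * C) (ha.mul_right C)
    (fun j => (hf.comp (hφ j)).const_mul (a j)) (Eventually.of_forall fun y j => ?_)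
  rw [norm_mul]
  exact mul_le_mul_of_nonneg_left (hfC _) (norm_nonneg _)

lemma tendsto_of_eq_add_mul_comp_div_of_norm_lt_one {f g : ℝ → ℂ} {c L : ℂ} {r C : ℝ}
    (hr : 1 < r) (hc : ‖c‖ < 1) (hfC : ∀ y, ‖f y‖ ≤ C) (hf : Tendsto f atTop (𝓝 L))
    (hg : ∀ y < 1, g y = 0) (hrec : ∀ y, g y = f y + c * g (y / r)) :
    Tendsto g atTop (𝓝 ((1 - c)⁻¹ * L)) := by
  have hr0 : 0 < r := one_pos.trans hr
  have hf0 : ∀ y < 1, f y = 0 := fun y hy => by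
    have hyr : y / r < 1 := by
      rcases le_or_gt 0 y with h | h
      · exact (div_le_self h hr.le).trans_lt hy
      · exact (div_neg_of_neg_of_pos h hr0).trans one_pos
    simpa [hg y hy, hg _ hyr, eq_comm] using hrec y
  have hfin : ∀ n y, y < r ^ n → g y = ∑ j ∈ range n, c ^ j * f (y / r ^ j) := by
    intro n
    induction n with
    | zero => intro y hy; simpa using hg y (by simpa using hy)
    | succ n ih =>
      intro y hy
      rw [hrec y, ih (y / r) (by rwa [div_lt_iff₀ hr0, ← pow_succ]), sum_range_succ', mul_sum]
      simp only [div_div, ← pow_succ', pow_succ, pow_zero, div_one, one_mul]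
      rw [add_comm]
      congr 1
      exact sum_congr rfl fun j _ => by ring
  have htsum : ∀ y, g y = ∑' j, c ^ j * f (y / r ^ j) := by
    intro y
    obtain ⟨n, hn⟩ := pow_unbounded_of_one_lt y hr
    rw [hfin n y hn, tsum_eq_sum fun j hj => ?_]
    rw [hf0 _ ((div_lt_one (by positivity)).2 (hn.trans_le (pow_le_pow_right₀ hr.le
      (by simpa using hj)))), mul_zero]
  rw [← tsum_geometric_of_norm_lt_one hc]
  refine (tendsto_tsum_mul_comp hfC hf ?_ fun j => tendsto_id.atTop_div_const (by positivity)).congr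
    fun y => (htsum y).symm
  simpa using summable_geometric_of_lt_one (norm_nonneg c) hc

lemma hasSum_of_eq_add_mul_comp_div {f g : ℝ → ℂ} {c : ℂ} {r C A : ℝ} (hr : 1 < r)
    (hc : r < ‖c‖) (hfC : ∀ y, ‖f y‖ ≤ C) (hg : ∀ y, 0 ≤ y → ‖g y‖ ≤ A * y)
    (hrec : ∀ y, g y = f y + c * g (y / r)) {y : ℝ} (hy : 0 ≤ y) :
    HasSum (fun j => -c⁻¹ ^ (j + 1) * f (r ^ (j + 1) * y)) (g y) := by
  have hr0 : 0 < r := one_pos.trans hr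
  have hc0 : c ≠ 0 := norm_pos_iff.1 (hr0.trans hc)
  have hcinv : ‖c⁻¹‖ < 1 := by rw [norm_inv]; exact inv_lt_one_of_one_lt₀ (hr.trans hc)
  have hup : ∀ J, g y = ∑ j ∈ range J, -c⁻¹ ^ (j + 1) * f (r ^ (j + 1) * y)
      + c⁻¹ ^ J * g (r ^ J * y) := by
    intro J
    induction J with
    | zero => simp
    | succ J ih =>
      have h := hrec (r ^ (J + 1) * y)
      rw [show r ^ (J + 1) * y / r = r ^ J * y by rw [pow_succ]; field_simp] at h
      rw [ih, sum_range_succ, add_assoc, h]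
      linear_combination (-(c⁻¹ ^ J * g (r ^ J * y))) * inv_mul_cancel₀ hc0
  have hrem : Tendsto (fun J => c⁻¹ ^ J * g (r ^ J * y)) atTop (𝓝 0) := by
    have hq : r * ‖c⁻¹‖ < 1 := by
      rw [norm_inv, ← div_eq_mul_inv, div_lt_one (hr0.trans hc)]; exact hc
    have h0 := (tendsto_pow_atTop_nhds_zero_of_lt_one (by positivity) hq).const_mul (A * y)
    rw [mul_zero] at h0
    refine squeeze_zero_norm (fun J => ?_) h0
    rw [norm_mul, norm_pow, mul_pow]
    calc ‖c⁻¹‖ ^ J * ‖g (r ^ J * y)‖ ≤ ‖c⁻¹‖ ^ J * (A * (r ^ J * y)) :=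
          mul_le_mul_of_nonneg_left (hg _ (by positivity)) (by positivity)
      _ = A * y * (r ^ J * ‖c⁻¹‖ ^ J) := by ring
  have hsn : Summable fun j => ‖-c⁻¹ ^ (j + 1) * f (r ^ (j + 1) * y)‖ := by
    refine ((summable_geometric_of_lt_one (norm_nonneg _) hcinv).mul_right
      (‖c⁻¹‖ * C)).of_nonneg_of_le (fun _ => norm_nonneg _) fun j => ?_
    rw [norm_mul, norm_neg, norm_pow, pow_succ, mul_assoc]
    gcongr
    exact hfC _
  rw [hasSum_iff_tendsto_nat_of_summable_norm hsn]
  have h := (tendsto_const_nhds (x := g y)).sub hrem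
  rw [sub_zero] at h
  exact h.congr fun J => by rw [hup J]; ring

lemma tendsto_of_eq_add_mul_comp_div_of_lt_norm {f g : ℝ → ℂ} {c L : ℂ} {r C A : ℝ}
    (hr : 1 < r) (hc : r < ‖c‖) (hfC : ∀ y, ‖f y‖ ≤ C) (hf : Tendsto f atTop (𝓝 L))
    (hg : ∀ y, 0 ≤ y → ‖g y‖ ≤ A * y) (hrec : ∀ y, g y = f y + c * g (y / r)) :
    Tendsto g atTop (𝓝 ((1 - c)⁻¹ * L)) := by
  have hr0 : 0 < r := one_pos.trans hr
  have hc0 : c ≠ 0 := norm_pos_iff.1 (hr0.trans hc)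
  have hc1 : c ≠ 1 := by rintro rfl; simp at hc; linarith
  have hcinv : ‖c⁻¹‖ < 1 := by rw [norm_inv]; exact inv_lt_one_of_one_lt₀ (hr.trans hc)
  have ha : Summable fun j => ‖-c⁻¹ ^ (j + 1)‖ := by
    simpa [pow_succ] using (summable_geometric_of_lt_one (norm_nonneg _) hcinv).mul_right ‖c⁻¹‖
  have hval : ∑' j, -c⁻¹ ^ (j + 1) = (1 - c)⁻¹ := by
    simp only [tsum_neg, pow_succ, tsum_mul_right, tsum_geometric_of_norm_lt_one hcinv]
    field_simp [sub_ne_zero.2 hc1, sub_ne_zero.2 hc1.symm]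
    ring
  have hlim := tendsto_tsum_mul_comp hfC hf ha (φ := fun j y => r ^ (j + 1) * y)
    fun j => tendsto_id.const_mul_atTop (pow_pos hr0 _)
  rw [hval] at hlim
  exact hlim.congr' ((eventually_ge_atTop 0).mono fun y hy =>
    (hasSum_of_eq_add_mul_comp_div hr hc hfC hg hrec hy).tsum_eq)

lemma sum_Icc_filter_dvd {M : Type*} [AddCommMonoid M] {d : ℕ} (hd : 0 < d) (n : ℕ)
    (f : ℕ → M) : ∑ K ∈ (Icc 1 n).filter (d ∣ ·), f K = ∑ m ∈ Icc 1 (n / d), f (d * m) := by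
  symm
  refine sum_nbij' (d * ·) (· / d) (fun m hm => ?_) (fun K hK => ?_) (fun m _ => ?_)
    (fun K hK => ?_) (fun m _ => rfl)
  · simp only [mem_Icc, mem_filter] at hm ⊢
    refine ⟨⟨Nat.mul_pos hd hm.1, ?_⟩, dvd_mul_right d m⟩
    rw [mul_comm]; exact (Nat.le_div_iff_mul_le hd).1 hm.2
  · simp only [mem_Icc, mem_filter] at hK ⊢
    obtain ⟨⟨h1, h2⟩, k, rfl⟩ := hK
    rw [Nat.mul_div_cancel_left k hd]
    exact ⟨Nat.pos_of_mul_pos_left h1, (Nat.le_div_iff_mul_le hd).2 (by linarith)⟩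
  · exact Nat.mul_div_cancel_left m hd
  · simp only [mem_filter] at hK
    exact Nat.mul_div_cancel' hK.2

lemma mu_prime_mul {p m : ℕ} (hp : p.Prime) : mu (p * m) = if p ∣ m then 0 else -mu m := by
  unfold mu
  split_ifs with h
  · rw [ArithmeticFunction.moebius_eq_zero_of_not_squarefree, Int.cast_zero]
    exact fun hsq => hp.one_lt.ne' (Nat.isUnit_iff.1 (hsq p (mul_dvd_mul_left p h)))
  · rw [ArithmeticFunction.isMultiplicative_moebius.map_mul_of_coprime
      (hp.coprime_iff_not_dvd.2 h), ArithmeticFunction.moebius_apply_prime hp]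
    push_cast; ring

lemma coprime_prime_mul_iff {p K P : ℕ} (hp : p.Prime) :
    K.Coprime (p * P) ↔ ¬ p ∣ K ∧ K.Coprime P := by
  rw [Nat.coprime_mul_iff_right, Nat.coprime_comm, hp.coprime_iff_not_dvd]

lemma coprime_prod_pow_iff {K : ℕ} {S : Finset ℕ} {w : ℕ → ℕ} (hw : ∀ q ∈ S, w q ≠ 0) :
    K.Coprime (∏ q ∈ S, q ^ w q) ↔ K.Coprime (∏ q ∈ S, q) := by
  simp only [Nat.coprime_prod_right_iff]
  exact forall₂_congr fun q hq => Nat.coprime_pow_right_iff (Nat.pos_of_ne_zero (hw q hq)) K q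

lemma coprime_rad_iff {K b : ℕ} (hK : K ≠ 0) (hb : b ≠ 0) : K.Coprime (rad b) ↔ K.Coprime b := by
  have hrad : rad b ≠ 0 := prod_ne_zero_iff.2 fun p hp => (Nat.prime_of_mem_primeFactors hp).ne_zero
  rw [← Nat.disjoint_primeFactors hK hrad, ← Nat.disjoint_primeFactors hK hb, rad,
    Nat.primeFactors_prod_primeFactors]

lemma Nat.Prime.not_dvd_prod_pow {q : ℕ} (hq : q.Prime) {S : Finset ℕ} (hS : ∀ p ∈ S, p.Prime)
    (hqS : q ∉ S) (e : ℕ → ℕ) : ¬ q ∣ ∏ p ∈ S, p ^ e p := by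
  rw [hq.prime.dvd_finsetProd_iff]
  rintro ⟨p, hp, hdvd⟩
  exact hqS ((Nat.prime_dvd_prime_iff_eq hq (hS p hp)).1 (hq.dvd_of_dvd_pow hdvd) ▸ hp)

lemma Nat.Prime.not_dvd_prod {q : ℕ} (hq : q.Prime) {S : Finset ℕ} (hS : ∀ p ∈ S, p.Prime)
    (hqS : q ∉ S) : ¬ q ∣ ∏ p ∈ S, p := by
  simpa using hq.not_dvd_prod_pow hS hqS fun _ => 1

lemma prod_primes_mul_induction {R : ℕ → Prop} {S : Finset ℕ} (hS : ∀ q ∈ S, q.Prime) {P : ℕ}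
    (hP : ∀ q ∈ S, ¬ q ∣ P) (step : ∀ q ∈ S, ∀ Q, ¬ q ∣ Q → R Q → R (q * Q)) (h : R P) :
    R ((∏ q ∈ S, q) * P) := by
  induction S using Finset.induction_on with
  | empty => simpa using h
  | insert q S hqS ih =>
    rw [prod_insert hqS, mul_assoc]
    have hq := hS q (mem_insert_self q S)
    have hS' : ∀ r ∈ S, r.Prime := fun r hr => hS r (mem_insert_of_mem hr)
    refine step q (mem_insert_self q S) _ (fun hdvd => ?_) ?_
    · exact (hq.prime.dvd_mul.1 hdvd).elim (hq.not_dvd_prod hS' hqS) (hP q (mem_insert_self q S))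
    · exact ih hS' (fun r hr => hP r (mem_insert_of_mem hr))
        fun r hr => step r (mem_insert_of_mem hr)

lemma prod_primes_induction {R : ℕ → Prop} {U V : Finset ℕ} (hUV : U ⊆ V)
    (hV : ∀ q ∈ V, q.Prime) (step : ∀ q ∈ V \ U, ∀ Q, ¬ q ∣ Q → R Q → R (q * Q))
    (h : R (∏ q ∈ U, q)) : R (∏ q ∈ V, q) := by
  rw [← prod_sdiff hUV]
  refine prod_primes_mul_induction (fun q hq => hV q (mem_sdiff.1 hq).1) (fun q hq => ?_) step h
  exact (hV q (mem_sdiff.1 hq).1).not_dvd_prod (fun r hr => hV r (hUV hr)) (mem_sdiff.1 hq).2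

section CoprimeSeries

variable {F : ℕ → ℂ} {P Q : ℕ}

lemma SS_eq_zero_of_lt_one {y : ℝ} (hy : y < 1) : SS F P y = 0 := by
  simp [SS, Nat.floor_eq_zero.2 hy]

lemma SConv_congr (h : ∀ K, 0 < K → (K.Coprime P ↔ K.Coprime Q)) :
    SConv F P ↔ SConv F Q := by
  have hSS : SS F P = SS F Q := by
    ext y
    exact sum_congr (filter_congr fun K hK => h K (mem_Icc.1 hK).1) fun _ _ => rfl
  simp only [SConv, STendsto, hSS]

lemma SS_eq_sub {p : ℕ} (hp : p.Prime) (hpP : ¬ p ∣ P) (y : ℝ) :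
    SS F P y = SS F (p * P) y - SS (fun m => F (p * m)) (p * P) (y / p) := by
  simp only [SS, Nat.floor_div_natCast, sum_filter]
  rw [← sum_filter_add_sum_filter_not (Icc 1 ⌊y⌋₊) (p ∣ ·), sum_Icc_filter_dvd hp.pos,
    add_comm, sub_eq_add_neg, ← sum_neg_distrib, sum_filter]
  congr 1 <;> refine sum_congr rfl fun K _ => ?_
  · change _ = if K.Coprime (p * P) then _ else _
    simp only [coprime_prime_mul_iff hp]
    by_cases hK : p ∣ K <;> simp [hK]
  · have hpP' : p.Coprime P := hp.coprime_iff_not_dvd.2 hpP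
    change (if (p * K).Coprime P then _ else _) = -if K.Coprime (p * P) then _ else _
    simp only [mu_prime_mul hp, coprime_prime_mul_iff hp, Nat.coprime_mul_iff_left,
      and_iff_right hpP']
    by_cases hK : p ∣ K <;> split_ifs <;> simp_all

lemma SConv.exists_norm_le (h : SConv F P) : ∃ C, ∀ y, ‖SS F P y‖ ≤ C := by
  obtain ⟨L, hL : Tendsto (SS F P) atTop (𝓝 L)⟩ := h
  obtain ⟨C, hC⟩ := (hL.comp tendsto_natCast_atTop_atTop).norm.bddAbove_range
  refine ⟨C, fun y => ?_⟩
  have hfloor : SS F P y = SS F P ⌊y⌋₊ := by simp [SS]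
  exact hfloor ▸ hC ⟨_, rfl⟩

lemma SConv.exists_norm_mul_mu_le (h : SConv F 1) : ∃ C, ∀ K, ‖F K * mu K‖ ≤ C := by
  obtain ⟨C, hC⟩ := h.exists_norm_le
  have hC0 : 0 ≤ C := (norm_nonneg _).trans (hC 0)
  refine ⟨C + C, fun K => ?_⟩
  cases K with
  | zero => simpa [mu] using add_nonneg hC0 hC0
  | succ n =>
    have hterm : F (n + 1) * mu (n + 1) = SS F 1 (n + 1 : ℕ) - SS F 1 n := by
      simp only [SS, Nat.floor_natCast, Nat.gcd_one_right, filter_true]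
      rw [sum_Icc_succ_top (by omega)]
      ring
    rw [hterm]
    exact (norm_sub_le _ _).trans (add_le_add (hC _) (hC _))

lemma norm_SS_le {C : ℝ} (hC : ∀ K, ‖F K * mu K‖ ≤ C) {y : ℝ} (hy : 0 ≤ y) :
    ‖SS F P y‖ ≤ C * y := by
  have hC0 : 0 ≤ C := (norm_nonneg _).trans (hC 0)
  calc ‖SS F P y‖ ≤ ∑ _K ∈ (Icc 1 ⌊y⌋₊).filter fun r => Nat.gcd r P = 1, C :=
        (norm_sum_le _ _).trans (sum_le_sum fun K _ => hC K)
    _ ≤ ⌊y⌋₊ * C := by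
        rw [sum_const, nsmul_eq_mul]
        gcongr
        exact_mod_cast (card_filter_le _ _).trans (by simp)
    _ ≤ C * y := by rw [mul_comm]; gcongr; exact Nat.floor_le hy

end CoprimeSeries

def IsMulAt (F : ℕ → ℂ) (p : ℕ) (c : ℕ → ℂ) : Prop :=
  ∀ j m, 0 < m → ¬ p ∣ m → F (p ^ j * m) = c j * F m

lemma IsMult.isMulAt {G : ℕ → ℂ} (hG : IsMult G) {p d : ℕ} (hp : p.Prime) (hd : 0 < d)
    (hpd : ¬ p ∣ d) : IsMulAt (fun K => G (d * K)) p (fun j => G (p ^ j)) := by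
  intro j m hm hpm
  simp only [mul_left_comm d]
  exact hG _ _ (pow_pos hp.pos j) (Nat.mul_pos hd hm)
    (Nat.Coprime.pow_left j (hp.coprime_iff_not_dvd.2 (hp.prime.not_dvd_mul hpd hpm)))

section LocalFactor

variable {F : ℕ → ℂ} {p P : ℕ} {c : ℕ → ℂ}

lemma SS_pow_mul (hF : IsMulAt F p c) (hp : p.Prime) (j : ℕ) (y : ℝ) :
    SS (fun K => F (p ^ j * K)) (p * P) y = c j * SS F (p * P) y := by
  rw [SS, SS, mul_sum]
  refine sum_congr rfl fun K hK => ?_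
  obtain ⟨⟨hK, -⟩, hKP⟩ := mem_filter.1 hK |>.imp_left mem_Icc.1
  rw [hF j K hK ((coprime_prime_mul_iff hp).1 hKP).1, mul_assoc]

lemma SS_pow_mul_eq_sub (hF : IsMulAt F p c) (hp : p.Prime) (hpP : ¬ p ∣ P) (e : ℕ) (y : ℝ) :
    SS (fun K => F (p ^ e * K)) P y
      = c e * SS F (p * P) y - c (e + 1) * SS F (p * P) (y / p) := by
  simp only [SS_eq_sub hp hpP y, ← mul_assoc, ← pow_succ, SS_pow_mul hF hp]

lemma SS_eq_sub_mul (hF : IsMulAt F p c) (hp : p.Prime) (hpP : ¬ p ∣ P) (y : ℝ) :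
    SS F P y = SS F (p * P) y - c 1 * SS F (p * P) (y / p) := by
  rw [SS_eq_sub hp hpP y, ← SS_pow_mul hF hp 1]
  simp only [pow_one]

lemma SS_pow_mul_eq_mul (hF : IsMulAt F p c) (hp : p.Prime) (hpP : ¬ p ∣ P) {e : ℕ}
    (hc : c (e + 1) = c e * c 1) (y : ℝ) : SS (fun K => F (p ^ e * K)) P y = c e * SS F P y := by
  rw [SS_pow_mul_eq_sub hF hp hpP, SS_eq_sub_mul hF hp hpP, hc]
  ring

lemma SConv.pow_mul_of_prime_mul (hF : IsMulAt F p c) (hp : p.Prime) (hpP : ¬ p ∣ P) (e : ℕ)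
    (h : SConv F (p * P)) : SConv (fun K => F (p ^ e * K)) P := by
  obtain ⟨L, hL : Tendsto (SS F (p * P)) atTop (𝓝 L)⟩ := h
  have hL' := (tendsto_comp_div_const_iff (c := (p : ℝ)) (by exact_mod_cast hp.pos)).2 hL
  exact ⟨_, ((hL.const_mul (c e)).sub (hL'.const_mul (c (e + 1)))).congr
    fun y => (SS_pow_mul_eq_sub hF hp hpP e y).symm⟩

lemma SConv.of_prime_mul (hF : IsMulAt F p c) (hp : p.Prime) (hpP : ¬ p ∣ P)
    (h : SConv F (p * P)) : SConv F P := by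
  simpa using h.pow_mul_of_prime_mul hF hp hpP 0

lemma SConv.pow_mul_of_eq (hF : IsMulAt F p c) (hp : p.Prime) (hpP : ¬ p ∣ P) {e : ℕ}
    (hc : c (e + 1) = c e * c 1) (h : SConv F P) : SConv (fun K => F (p ^ e * K)) P := by
  obtain ⟨L, hL : Tendsto (SS F P) atTop (𝓝 L)⟩ := h
  exact ⟨_, (hL.const_mul (c e)).congr fun y => (SS_pow_mul_eq_mul hF hp hpP hc y).symm⟩

lemma SConv.prime_mul_of_ne (hF : IsMulAt F p c) (hp : p.Prime) (hpP : ¬ p ∣ P) {w : ℕ}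
    (hc : c (w + 1) ≠ c w * c 1) (h : SConv F P) (hw : SConv (fun K => F (p ^ w * K)) P) :
    SConv F (p * P) := by
  obtain ⟨L, hL : Tendsto (SS F P) atTop (𝓝 L)⟩ := h
  obtain ⟨M, hM : Tendsto (SS (fun K => F (p ^ w * K)) P) atTop (𝓝 M)⟩ := hw
  have key : ∀ y, SS F (p * P) (y / p)
      = (c (w + 1) - c w * c 1)⁻¹ * (c w * SS F P y - SS (fun K => F (p ^ w * K)) P y) := by
    intro y
    rw [SS_pow_mul_eq_sub hF hp hpP, SS_eq_sub_mul hF hp hpP]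
    field_simp [sub_ne_zero.2 hc]
    ring
  have hlim := (((hL.const_mul (c w)).sub hM).const_mul (c (w + 1) - c w * c 1)⁻¹).congr
    fun y => (key y).symm
  exact ⟨_, (tendsto_comp_div_const_iff (by exact_mod_cast hp.pos)).1 hlim⟩

lemma SConv.prime_mul_of_norm (hF : IsMulAt F p c) (hp : p.Prime) (hpP : ¬ p ∣ P)
    (hc : ‖c 1‖ < 1 ∨ (p : ℝ) < ‖c 1‖) {C : ℝ} (hC : ∀ K, ‖F K * mu K‖ ≤ C) (h : SConv F P) :
    SConv F (p * P) := by
  obtain ⟨B, hB⟩ := h.exists_norm_le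
  obtain ⟨L, hL : Tendsto (SS F P) atTop (𝓝 L)⟩ := h
  have hrec : ∀ y, SS F (p * P) y = SS F P y + c 1 * SS F (p * P) (y / p) := fun y => by
    rw [SS_eq_sub_mul hF hp hpP y]; ring
  have hp1 : (1 : ℝ) < p := by exact_mod_cast hp.one_lt
  rcases hc with hc | hc
  · exact ⟨_, tendsto_of_eq_add_mul_comp_div_of_norm_lt_one hp1 hc hB hL
      (fun y hy => SS_eq_zero_of_lt_one hy) hrec⟩
  · exact ⟨_, tendsto_of_eq_add_mul_comp_div_of_lt_norm hp1 hc hB hL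
      (fun y hy => norm_SS_le hC hy) hrec⟩

end LocalFactor

lemma pow_eq_of_cmIndex_eq_top {G : ℕ → ℂ} {p : ℕ} (h : cmIndex G p = ⊤) {k : ℕ} (hk : 1 ≤ k) :
    G (p ^ k) = G p ^ k := by
  by_contra hne
  have hle : cmIndex G p ≤ k :=
    iSup₂_le fun n hn => Nat.cast_le.2 (not_lt.1 fun hkn => hne (hn k hk hkn.le))
  exact ENat.natCast_ne_top k (top_le_iff.1 (h ▸ hle))

lemma cmIndex_toNat_spec {G : ℕ → ℂ} {p : ℕ} (h : cmIndex G p ≠ ⊤) :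
    (cmIndex G p).toNat ≠ 0 ∧
      G (p ^ ((cmIndex G p).toNat + 1)) ≠ G (p ^ (cmIndex G p).toNat) * G p := by
  set A := {n : ℕ | ∀ k : ℕ, 1 ≤ k → k ≤ n → G (p ^ k) = G p ^ k}
  set w := (cmIndex G p).toNat
  have hw : (w : ℕ∞) = cmIndex G p := ENat.natCast_toNat h
  have hle : ∀ n ∈ A, n ≤ w := fun n hn => by
    have : (n : ℕ∞) ≤ cmIndex G p := le_iSup₂ (f := fun n (_ : n ∈ A) => (n : ℕ∞)) n hn
    exact_mod_cast hw ▸ this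
  have h1 : 1 ∈ A := fun k hk1 hk2 => by rw [le_antisymm hk2 hk1, pow_one, pow_one]
  have hwA : w ∈ A := by
    by_contra hwA
    have hlt : cmIndex G p ≤ (w - 1 : ℕ) := iSup₂_le fun n hn => Nat.cast_le.2 <| by
      have := hle n hn
      have : n ≠ w := fun h => hwA (h ▸ hn)
      omega
    have : w ≤ w - 1 := by exact_mod_cast hw ▸ hlt
    have := hle 1 h1
    omega
  refine ⟨by have := hle 1 h1; omega, fun hne => ?_⟩
  rw [hwA w (hle 1 h1) le_rfl, ← pow_succ] at hne
  have : w + 1 ∈ A := fun k hk1 hk2 => by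
    rcases hk2.lt_or_eq with hlt | rfl
    · exact hwA k hk1 (by omega)
    · exact hne
  have := hle _ this
  omega

lemma not_isBad_iff {G : ℕ → ℂ} {p : ℕ} : ¬ IsBad G p ↔ ‖G p‖ < 1 ∨ (p : ℝ) < ‖G p‖ := by
  rw [IsBad, not_and_or, not_le, not_le]

lemma not_isBad_of_not_isSimplyBad_of_not_isHyperbad {G : ℕ → ℂ} {p : ℕ} (hp : p.Prime)
    (hs : ¬ IsSimplyBad G p) (hh : ¬ IsHyperbad G p) : ¬ IsBad G p := fun hbad => by
  by_cases htop : cmIndex G p = ⊤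
  exacts [hh ⟨hp, hbad, htop⟩, hs ⟨hp, hbad, htop⟩]

section Multiplicative

variable {G : ℕ → ℂ}

lemma RS_eq_sum_SS {a : ℕ} (ha : 0 < a) (x : ℝ) :
    RS G a x = ∑ d ∈ a.divisors, (d : ℂ) * SS (fun K => G (d * K)) 1 (x / d) := by
  have hgcd : ∀ q, (Nat.gcd q a).divisors = a.divisors.filter (· ∣ q) := fun q => by
    ext d
    simp [Nat.dvd_gcd_iff, ha.ne', and_comm]
  simp only [RS, cR, hgcd, sum_filter, mul_sum, mul_ite, mul_zero]
  rw [sum_comm]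
  refine sum_congr rfl fun d hd => ?_
  have hd0 : 0 < d := Nat.pos_of_mem_divisors hd
  rw [← sum_filter, sum_Icc_filter_dvd hd0, SS, Nat.floor_div_natCast, mul_sum]
  simp only [Nat.gcd_one_right, filter_true, Nat.mul_div_cancel_left _ hd0]
  exact sum_congr rfl fun m _ => by ring

lemma RConv_of_forall_dvd {a : ℕ} (ha : 0 < a) (h : ∀ d, d ∣ a → SConv (fun K => G (d * K)) 1) :
    RConv G a := by
  show ∃ L, Tendsto (RS G a) atTop (𝓝 L)
  rw [funext (RS_eq_sum_SS ha)]
  refine exists_tendsto_sum fun d hd => ?_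
  obtain ⟨L, hL : Tendsto (SS _ 1) atTop (𝓝 L)⟩ := h d (Nat.dvd_of_mem_divisors hd)
  have hd0 : (0 : ℝ) < d := by exact_mod_cast Nat.pos_of_mem_divisors hd
  exact ⟨_, ((tendsto_comp_div_const_iff hd0).2 hL).const_mul _⟩

lemma SConv_of_forall_dvd_RConv {d : ℕ} (hd : 0 < d) (h : ∀ a, a ∣ d → RConv G a) :
    SConv (fun K => G (d * K)) 1 := by
  induction d using Nat.strong_induction_on with
  | _ d ih =>
  obtain ⟨R, hR : Tendsto (RS G d) atTop (𝓝 R)⟩ := h d dvd_rfl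
  obtain ⟨M, hM⟩ := exists_tendsto_sum (s := d.properDivisors)
    (f := fun e x => (e : ℂ) * SS (fun K => G (e * K)) 1 (x / e)) fun e he => by
      obtain ⟨he, hed⟩ := Nat.mem_properDivisors.1 he
      have he0 : 0 < e := Nat.pos_of_dvd_of_pos he hd
      obtain ⟨L, hL : Tendsto (SS _ 1) atTop (𝓝 L)⟩ :=
        ih e hed he0 fun a ha => h a (ha.trans he)
      exact ⟨_, ((tendsto_comp_div_const_iff (by exact_mod_cast he0)).2 hL).const_mul _⟩
  have hd0 : (d : ℂ) ≠ 0 := by exact_mod_cast hd.ne'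
  have hlim : Tendsto (fun x => SS (fun K => G (d * K)) 1 (x / d)) atTop
      (𝓝 ((d : ℂ)⁻¹ * (R - M))) := ((hR.sub hM).const_mul _).congr fun x => by
    rw [RS_eq_sum_SS hd x, ← Nat.cons_self_properDivisors hd.ne', sum_cons]
    field_simp
    ring
  exact ⟨_, (tendsto_comp_div_const_iff (by exact_mod_cast hd)).1 hlim⟩

lemma SConv_mul_of_forall_hyperbad_free (hG : IsMult G)
    (h : ∀ b, 0 < b → (∀ p, IsHyperbad G p → ¬ p ∣ b) → SConv G b) {d : ℕ} (hd : 0 < d) :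
    ∀ {P}, 0 < P → d.Coprime P → (∀ p, IsHyperbad G p → ¬ p ∣ P) →
      SConv (fun K => G (d * K)) P := by
  induction d using Nat.recOnPrimePow with
  | zero => exact absurd hd (lt_irrefl 0)
  | one => intro P hP _ hPh; simpa only [one_mul] using h P hP hPh
  | prime_pow_mul d p n hp hpd hn ih =>
    intro P hP hcop hPh
    have hd0 : 0 < d := Nat.pos_of_mul_pos_left hd
    have hpP : ¬ p ∣ P := hp.coprime_iff_not_dvd.1
      (hcop.coprime_dvd_left (dvd_mul_of_dvd_left (dvd_pow_self p hn.ne') d))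
    have hdP : d.Coprime P := hcop.coprime_dvd_left (dvd_mul_left d _)
    have hF := hG.isMulAt hp hd0 hpd
    have htwist : ∀ K, p ^ n * d * K = d * (p ^ n * K) := fun K => by ring
    simp only [htwist]
    by_cases hH : IsHyperbad G p
    · have hc : G (p ^ (n + 1)) = G (p ^ n) * G (p ^ 1) := by
        rw [pow_eq_of_cmIndex_eq_top hH.2.2 (by omega), pow_eq_of_cmIndex_eq_top hH.2.2 hn,
          pow_one, pow_succ]
      exact (ih hd0 hP hdP hPh).pow_mul_of_eq hF hp hpP hc
    · refine (ih hd0 (Nat.mul_pos hp.pos hP) ?_ fun q hq hqpP => ?_).pow_mul_of_prime_mul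
        hF hp hpP n
      · exact Nat.Coprime.mul_right (hp.coprime_iff_not_dvd.2 hpd).symm hdP
      · rcases hq.1.prime.dvd_mul.1 hqpP with hqp | hqP
        · exact hH ((Nat.prime_dvd_prime_iff_eq hq.1 hp).1 hqp ▸ hq)
        · exact hPh q hq hqP

lemma SConv_prod_mul_of_forall_dvd (hG : IsMult G) {S : Finset ℕ} (hS : ∀ q ∈ S, q.Prime)
    {w : ℕ → ℕ} (hw : ∀ q ∈ S, G (q ^ (w q + 1)) ≠ G (q ^ w q) * G q) {P : ℕ}
    (hP : ∀ q ∈ S, ¬ q ∣ P) (h : ∀ d, d ∣ ∏ q ∈ S, q ^ w q → SConv (fun K => G (d * K)) P) :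
    SConv G ((∏ q ∈ S, q) * P) := by
  induction S using Finset.induction_on generalizing P with
  | empty => simpa using h 1 (by simp)
  | insert q S hqS ih =>
    have hq := hS q (mem_insert_self q S)
    have hqP := hP q (mem_insert_self q S)
    have hS' : ∀ r ∈ S, r.Prime := fun r hr => hS r (mem_insert_of_mem hr)
    rw [prod_insert hqS, mul_assoc, mul_left_comm]
    refine ih hS' (fun r hr => hw r (mem_insert_of_mem hr)) (fun r hr hrqP => ?_) fun d hd => ?_
    · rcases (hS' r hr).prime.dvd_mul.1 hrqP with hrq | hrP
      · exact hqS ((Nat.prime_dvd_prime_iff_eq (hS' r hr) hq).1 hrq ▸ hr)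
      · exact hP r (mem_insert_of_mem hr) hrP
    have hd0 : 0 < d := Nat.pos_of_dvd_of_pos hd (prod_pos fun r hr => pow_pos (hS' r hr).pos _)
    have hqd : ¬ q ∣ d := fun hqd => hq.not_dvd_prod_pow hS' hqS w (hqd.trans hd)
    have hd' := h (q ^ w q * d) (by rw [prod_insert hqS]; exact mul_dvd_mul_left _ hd)
    simp only [show ∀ K, q ^ w q * d * K = d * (q ^ w q * K) from fun K => by ring] at hd'
    exact (h d (by rw [prod_insert hqS]; exact dvd_mul_of_dvd_right hd _)).prime_mul_of_ne
      (hG.isMulAt hq hd0 hqd) hq hqP (by simpa using hw q (mem_insert_self q S)) hd'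

lemma SConv_prod_of_not_isBad (hG : IsMult G) {C : ℝ} (hC : ∀ K, ‖G K * mu K‖ ≤ C)
    {S T : Finset ℕ} (hS : ∀ q ∈ S, q.Prime) (hT : ∀ q ∈ T, q.Prime)
    (hgood : ∀ q ∈ T, q ∉ S → ¬ IsBad G q) (h : SConv G (∏ q ∈ S, q)) :
    SConv G (∏ q ∈ T, q) := by
  have hF : ∀ q, q.Prime → IsMulAt G q (fun j => G (q ^ j)) := fun q hq => by
    simpa using hG.isMulAt hq one_pos hq.not_dvd_one
  have hinter : SConv G (∏ q ∈ S ∩ T, q) := by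
    refine prod_primes_induction (R := fun Q => SConv G Q → SConv G (∏ q ∈ S ∩ T, q))
      inter_subset_left hS (fun q hq Q hqQ hR hQ => hR ?_) id h
    have hq' := hS q (mem_sdiff.1 hq).1
    exact hQ.of_prime_mul (hF q hq') hq' hqQ
  refine prod_primes_induction inter_subset_right hT (fun q hq Q hqQ hQ => ?_) hinter
  obtain ⟨hqT, hqST⟩ := mem_sdiff.1 hq
  have hnorm := not_isBad_iff.1 (hgood q hqT fun hqS => hqST (mem_inter.2 ⟨hqS, hqT⟩))
  exact hQ.prime_mul_of_norm (hF q (hT q hqT)) (hT q hqT) hqQ (by simpa using hnorm) hC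

end Multiplicative

/-- **Finiteness convergence theorem** (Theorem 1.1). -/
theorem stmt_0 (G : ℕ → ℂ) (hG : IsMult G)
    (hfin : {p : ℕ | p.Prime ∧ IsBad G p}.Finite)
    (hconv1 : SConv G 1) :
    List.TFAE
      [ ∀ a : ℕ, 0 < a → RConv G a,
        ∀ a : ℕ, a ∣ ramCond G → RConv G a,
        SConv G (ramCond G),
        ∀ b : ℕ, 0 < b → (∀ p : ℕ, IsHyperbad G p → ¬ p ∣ b) → SConv G b ] := by
  have hSfin : {p | IsSimplyBad G p}.Finite := hfin.subset fun p hp => ⟨hp.1, hp.2.1⟩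
  set S := hSfin.toFinset
  have hS : ∀ p, p ∈ S ↔ IsSimplyBad G p := fun p => hSfin.mem_toFinset
  have hSprime : ∀ p ∈ S, p.Prime := fun p hp => ((hS p).1 hp).1
  have hw := fun p hp => cmIndex_toNat_spec ((hS p).1 hp).2.2
  have hN : ramCond G = ∏ p ∈ S, p ^ (cmIndex G p).toNat :=
    finprod_mem_eq_finite_toFinset_prod _ hSfin
  have hN0 : 0 < ramCond G := hN ▸ prod_pos fun p hp => pow_pos (hSprime p hp).pos _
  have hSN : SConv G (ramCond G) ↔ SConv G (∏ p ∈ S, p) :=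
    SConv_congr fun K _ => hN ▸ coprime_prod_pow_iff fun p hp => (hw p hp).1
  obtain ⟨C, hC⟩ := hconv1.exists_norm_mul_mu_le
  tfae_have 1 → 2 := fun h a ha => h a (Nat.pos_of_dvd_of_pos ha hN0)
  tfae_have 2 → 3 := fun h => by
    have := SConv_prod_mul_of_forall_dvd hG hSprime (fun p hp => (hw p hp).2) (P := 1)
      (fun p hp => (hSprime p hp).not_dvd_one) fun d hd =>
        SConv_of_forall_dvd_RConv (Nat.pos_of_dvd_of_pos hd (hN ▸ hN0))
          fun a ha => h a (hN ▸ ha.trans hd)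
    exact hSN.2 (by simpa using this)
  tfae_have 3 → 4 := fun h b hb hbh =>
    (SConv_congr fun K hK => coprime_rad_iff hK.ne' hb.ne').1 <|
      SConv_prod_of_not_isBad hG hC hSprime (fun p => Nat.prime_of_mem_primeFactors)
        (fun q hq hqS => not_isBad_of_not_isSimplyBad_of_not_isHyperbad
          (Nat.prime_of_mem_primeFactors hq) (mt (hS q).2 hqS)
          fun hH => hbh q hH (Nat.dvd_of_mem_primeFactors hq)) (hSN.1 h)
  tfae_have 4 → 1 := fun h a ha => RConv_of_forall_dvd ha fun d hd =>
    SConv_mul_of_forall_hyperbad_free hG h (Nat.pos_of_dvd_of_pos hd ha) one_pos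
      (Nat.coprime_one_right d) fun p hp => hp.1.not_dvd_one
  tfae_finish
end

section
/- Let F : ℕ → ℂ be a function that is not identically zero. Let G₁, G₂ : ℕ → ℂ be multiplicative functions, each with finitely many bad primes, such that R_{G₁}(a) and R_{G₂}(a) converge with R_{G₁}(a) = R_{G₂}(a) = F(a) for all a ∈ ℕ. If G₁ and G₂ have the same opacity core, i.e. H_{G₁}(q) = H_{G₂}(q) for all q ∈ ℕ, then G₁ = G₂. -/
open Filter Finset

/-!
Grouping the terms of `R_G(a, x)` by `d = gcd(q, a)` gives `R_G(a, x) = ∑_{d ∣ a} d · L_G(d, x / d)`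
with the Lucht series `L_G(d, x) = ∑_{K ≤ x} μ(K) G(dK)`. By Möbius inversion every `L_G(d, ·)`
converges to a limit `ℓ(d)` that depends only on `F`, so `G₁` and `G₂` share it, and `ℓ ≠ 0`.

Fix a prime `p` and `d` with `p ∤ d`. Splitting `K` according to `p ∣ K` gives
`L_G(d p^k, x) = G(p^k) T(x) - G(p^{k+1}) T(x / p)`, where `T` sums over `p ∤ K`. Hence either
`G(p^k) = 1` for all `k`, or `ℓ(d p^k) = (G(p^k) - G(p^{k+1})) τ` for a constant `τ` (if `G` is
geometric on powers of `p` directly, otherwise because `T` then converges). In the second case,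
if `v` is the first index with `ℓ(d p^v) ≠ 0`, then `G(p^j) = 1` for `j ≤ v` and `G(p^{v+1}) ≠ 1`:
so `v` is the transparency index of `p` and the opacity core at `p` is `G(p^{v+1})`. That value
determines `τ`, and `τ` together with `ℓ` determines every `G(p^k)`.
-/

namespace Ramanujan

theorem mu_prime_mul {p m : ℕ} (hp : p.Prime) (hpm : ¬ p ∣ m) : mu (p * m) = -mu m := by
  simp [mu, ArithmeticFunction.isMultiplicative_moebius.map_mul_of_coprime
    ((Nat.Prime.coprime_iff_not_dvd hp).2 hpm), ArithmeticFunction.moebius_apply_prime hp]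

theorem mu_prime_mul_of_dvd {p m : ℕ} (hp : p.Prime) (hpm : p ∣ m) : mu (p * m) = 0 := by
  have : ¬ Squarefree (p * m) := fun h =>
    hp.not_isUnit (h p (mul_dvd_mul_left p hpm))
  simp [mu, ArithmeticFunction.moebius_eq_zero_of_not_squarefree this]

noncomputable def toArith (G : ℕ → ℂ) : ArithmeticFunction ℂ :=
  ⟨fun n => if n = 0 then 0 else G n, if_pos rfl⟩

theorem toArith_apply (G : ℕ → ℂ) {n : ℕ} (hn : n ≠ 0) : toArith G n = G n :=
  if_neg hn

end Ramanujan

namespace IsMult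

open Ramanujan

variable {G : ℕ → ℂ}

theorem apply_one_eq_one (hG : IsMult G) {n : ℕ} (hn : 0 < n) (hGn : G n ≠ 0) : G 1 = 1 := by
  have h := hG n 1 hn one_pos (Nat.coprime_one_right n)
  rw [mul_one] at h
  exact (mul_eq_left₀ hGn).1 h.symm

theorem isMultiplicative_toArith (hG : IsMult G) (h1 : G 1 = 1) :
    (toArith G).IsMultiplicative := by
  refine ArithmeticFunction.IsMultiplicative.iff_ne_zero.2 ⟨h1, fun {m n} hm hn hmn => ?_⟩
  rw [toArith_apply G hm, toArith_apply G hn, toArith_apply G (mul_ne_zero hm hn)]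
  exact hG m n (Nat.pos_of_ne_zero hm) (Nat.pos_of_ne_zero hn) hmn

theorem eq_of_forall_prime_pow {G' : ℕ → ℂ} (hG : IsMult G) (hG' : IsMult G') (h1 : G 1 = 1)
    (h1' : G' 1 = 1) (hpow : ∀ p k : ℕ, p.Prime → G (p ^ k) = G' (p ^ k)) {n : ℕ}
    (hn : 0 < n) : G n = G' n := by
  have heq : toArith G = toArith G' :=
    (ArithmeticFunction.IsMultiplicative.eq_iff_eq_on_prime_powers _
      (hG.isMultiplicative_toArith h1) _ (hG'.isMultiplicative_toArith h1')).2
      fun p k hp => by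
        rw [toArith_apply G (pow_ne_zero k hp.ne_zero), toArith_apply G' (pow_ne_zero k hp.ne_zero),
          hpow p k hp]
  rw [← toArith_apply G hn.ne', heq, toArith_apply G' hn.ne']

theorem apply_prime_pow_mul (hG : IsMult G) {p n : ℕ} (hp : p.Prime) (hn : 0 < n)
    (hpn : ¬ p ∣ n) (k : ℕ) : G (p ^ k * n) = G (p ^ k) * G n :=
  hG _ _ (pow_pos hp.pos k) hn (((Nat.Prime.coprime_iff_not_dvd hp).2 hpn).pow_left k)

open scoped Function in
theorem apply_prod_prime_pow_eq_one (hG : IsMult G) (h1 : G 1 = 1) {s : Finset ℕ}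
    (hs : ∀ q ∈ s, q.Prime) (e : ℕ → ℕ) (he : ∀ q ∈ s, G (q ^ e q) = 1) :
    G (∏ q ∈ s, q ^ e q) = 1 := by
  have hcop : (s : Set ℕ).Pairwise (Nat.Coprime on fun q => q ^ e q) :=
    fun q hq q' hq' hne => ((Nat.coprime_primes (hs q hq) (hs q' hq')).2 hne).pow _ _
  have hne : ∏ q ∈ s, q ^ e q ≠ 0 := prod_ne_zero_iff.2 fun q hq => pow_ne_zero _ (hs q hq).ne_zero
  rw [← toArith_apply G hne, (hG.isMultiplicative_toArith h1).map_prod _ s hcop]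
  exact prod_eq_one fun q hq => by
    rw [toArith_apply G (pow_ne_zero _ (hs q hq).ne_zero), he q hq]

end IsMult

namespace Ramanujan

theorem sum_Icc_filter_dvd {M : Type*} [AddCommMonoid M] {d : ℕ} (hd : 0 < d) (N : ℕ)
    (f : ℕ → M) :
    ∑ q ∈ (Icc 1 N).filter (d ∣ ·), f q = ∑ m ∈ Icc 1 (N / d), f (d * m) := by
  refine (sum_nbij' (· * d) (· / d) ?_ ?_ ?_ ?_ ?_).symm
  · intro m hm
    simp only [mem_filter, mem_Icc] at hm ⊢
    exact ⟨⟨Nat.mul_pos (by omega) hd, (Nat.le_div_iff_mul_le hd).1 hm.2⟩,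
      dvd_mul_left d m⟩
  · intro q hq
    simp only [mem_filter, mem_Icc] at hq ⊢
    exact ⟨(Nat.one_le_div_iff hd).2 (Nat.le_of_dvd (by omega) hq.2), Nat.div_le_div_right hq.1.2⟩
  · intro m _
    simp [hd.ne']
  · intro q hq
    exact Nat.div_mul_cancel (mem_filter.1 hq).2
  · intro m _
    rw [mul_comm]

theorem RS_eq_sum_divisors_LS (G : ℕ → ℂ) {a : ℕ} (ha : 0 < a) (x : ℝ) :
    RS G a x = ∑ d ∈ a.divisors, (d : ℂ) * LS G d (x / d) := by
  have hswap : ∀ q d, q ∈ Icc 1 ⌊x⌋₊ ∧ d ∈ (q.gcd a).divisors ↔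
      q ∈ (Icc 1 ⌊x⌋₊).filter (d ∣ ·) ∧ d ∈ a.divisors := by
    intro q d
    simp only [mem_Icc, Nat.mem_divisors, Nat.dvd_gcd_iff, mem_filter, ne_eq,
      Nat.gcd_eq_zero_iff]
    omega
  simp only [RS, cR, mul_sum]
  rw [sum_comm' hswap]
  refine sum_congr rfl fun d hd => ?_
  rw [sum_Icc_filter_dvd (Nat.pos_of_mem_divisors hd), LS, Nat.floor_div_natCast, mul_sum]
  refine sum_congr rfl fun m _ => ?_
  rw [Nat.mul_div_cancel_left m (Nat.pos_of_mem_divisors hd)]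
  ring

noncomputable def luchtLimit (F : ℕ → ℂ) (a : ℕ) : ℂ :=
  (a : ℂ)⁻¹ * ∑ y ∈ a.divisorsAntidiagonal, mu y.1 * F y.2

theorem sum_divisors_mul_luchtLimit (F : ℕ → ℂ) :
    ∀ a : ℕ, 0 < a → ∑ d ∈ a.divisors, (d : ℂ) * luchtLimit F d = F a := by
  refine ArithmeticFunction.sum_eq_iff_sum_mul_moebius_eq.2 fun a ha => ?_
  rw [luchtLimit, mul_inv_cancel_left₀ (by exact_mod_cast ha.ne')]
  rfl

theorem lTendsto_luchtLimit {G F : ℕ → ℂ} (hconv : ∀ a : ℕ, 0 < a → RTendsto G a (F a))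
    {a : ℕ} (ha : 0 < a) : LTendsto G a (luchtLimit F a) := by
  have hinv : ∀ x, ∑ y ∈ a.divisorsAntidiagonal, mu y.1 * RS G y.2 x
      = a * LS G a (x / a) := fun x =>
    ArithmeticFunction.sum_eq_iff_sum_mul_moebius_eq.1
      (fun n hn => (RS_eq_sum_divisors_LS G hn x).symm) a ha
  have hlim : Tendsto (fun x => ∑ y ∈ a.divisorsAntidiagonal, mu y.1 * RS G y.2 x) atTop
      (nhds (∑ y ∈ a.divisorsAntidiagonal, mu y.1 * F y.2)) :=
    tendsto_finsetSum _ fun y hy => (hconv y.2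
      (Nat.pos_of_mem_divisors (Nat.snd_mem_divisors_of_mem_antidiagonal hy))).const_mul _
  have hscale : Tendsto (fun x : ℝ => (a : ℝ) * x) atTop atTop :=
    tendsto_id.const_mul_atTop (by exact_mod_cast ha)
  refine ((hlim.comp hscale).const_mul (a : ℂ)⁻¹).congr fun x => ?_
  have ha' : (a : ℝ) ≠ 0 := by exact_mod_cast ha.ne'
  simp only [Function.comp_apply, hinv, mul_div_cancel_left₀ x ha']
  exact inv_mul_cancel_left₀ (by exact_mod_cast ha.ne') _

theorem exists_apply_ne_zero_of_rTendsto {G : ℕ → ℂ} {a : ℕ} {L : ℂ} (h : RTendsto G a L)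
    (hL : L ≠ 0) : ∃ q, 0 < q ∧ G q ≠ 0 := by
  by_contra! hG
  have hRS : (fun x => RS G a x) = fun _ => 0 := by
    funext x
    exact sum_eq_zero fun q hq => by rw [hG q (mem_Icc.1 hq).1, zero_mul]
  rw [_root_.RTendsto, hRS] at h
  exact hL (tendsto_nhds_unique h tendsto_const_nhds)

noncomputable def LScoprime (G : ℕ → ℂ) (p d : ℕ) (x : ℝ) : ℂ :=
  ∑ K ∈ (Icc 1 ⌊x⌋₊).filter (¬ p ∣ ·), mu K * G (d * K)

section LocalFactor

variable {G : ℕ → ℂ} {p d : ℕ}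

theorem LS_mul_prime_pow (hG : IsMult G) (hp : p.Prime) (hd : 0 < d) (hpd : ¬ p ∣ d)
    (k : ℕ) (x : ℝ) :
    LS G (d * p ^ k) x
      = G (p ^ k) * LScoprime G p d x - G (p ^ (k + 1)) * LScoprime G p d (x / p) := by
  have hsplit : ∀ j K, 0 < K → ¬ p ∣ K → G (d * p ^ j * K) = G (p ^ j) * G (d * K) :=
    fun j K hK hpK => by
      rw [show d * p ^ j * K = p ^ j * (d * K) by ring]
      exact hG.apply_prime_pow_mul hp (Nat.mul_pos hd hK)
        (fun h => (hp.dvd_mul.1 h).elim hpd hpK) j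
  have hcoprime : ∑ K ∈ (Icc 1 ⌊x⌋₊).filter (¬ p ∣ ·), mu K * G (d * p ^ k * K)
      = G (p ^ k) * LScoprime G p d x := by
    rw [LScoprime, mul_sum]
    refine sum_congr rfl fun K hK => ?_
    obtain ⟨hK, hpK⟩ := mem_filter.1 hK
    rw [hsplit k K (mem_Icc.1 hK).1 hpK]
    ring
  -- multiples `K = p m` contribute only when `p ∤ m`, since otherwise `μ(p m) = 0`
  have hmultiple : ∑ K ∈ (Icc 1 ⌊x⌋₊).filter (p ∣ ·), mu K * G (d * p ^ k * K)
      = -(G (p ^ (k + 1)) * LScoprime G p d (x / p)) := by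
    rw [sum_Icc_filter_dvd hp.pos, LScoprime, Nat.floor_div_natCast, mul_sum, ← sum_neg_distrib,
      ← sum_filter_of_ne (p := (¬ p ∣ ·)) fun m _ hm hpm => hm (by
        rw [mu_prime_mul_of_dvd hp hpm, zero_mul])]
    refine sum_congr rfl fun m hm => ?_
    obtain ⟨hm, hpm⟩ := mem_filter.1 hm
    rw [mu_prime_mul hp hpm, show d * p ^ k * (p * m) = d * p ^ (k + 1) * m by ring,
      hsplit (k + 1) m (mem_Icc.1 hm).1 hpm]
    ring
  rw [LS, ← sum_filter_not_add_sum_filter _ (p ∣ ·), hcoprime, hmultiple]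
  ring

theorem LS_eq_LScoprime_sub (hG : IsMult G) (h1 : G 1 = 1) (hp : p.Prime) (hd : 0 < d)
    (hpd : ¬ p ∣ d) (x : ℝ) :
    LS G d x = LScoprime G p d x - G p * LScoprime G p d (x / p) := by
  simpa [h1] using LS_mul_prime_pow hG hp hd hpd 0 x

theorem LS_mul_prime_pow_of_geometric (hG : IsMult G) (h1 : G 1 = 1) (hp : p.Prime)
    (hd : 0 < d) (hpd : ¬ p ∣ d) (hgeo : ∀ k, G (p ^ (k + 1)) = G p * G (p ^ k)) (k : ℕ)
    (x : ℝ) : LS G (d * p ^ k) x = G (p ^ k) * LS G d x := by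
  rw [LS_mul_prime_pow hG hp hd hpd k x, LS_eq_LScoprime_sub hG h1 hp hd hpd x, hgeo]
  ring

theorem exists_tendsto_LScoprime (hG : IsMult G) (h1 : G 1 = 1) (hp : p.Prime) (hd : 0 < d)
    (hpd : ¬ p ∣ d) {k : ℕ} (hk : G (p ^ (k + 1)) ≠ G p * G (p ^ k)) {L₀ L : ℂ}
    (hL₀ : LTendsto G d L₀) (hL : LTendsto G (d * p ^ k) L) :
    ∃ τ, Tendsto (LScoprime G p d) atTop (nhds τ) := by
  refine ⟨(G (p ^ (k + 1)) - G p * G (p ^ k))⁻¹ * (G (p ^ (k + 1)) * L₀ - G p * L),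
    (((hL₀.const_mul _).sub (hL.const_mul _)).const_mul _).congr fun x => ?_⟩
  rw [LS_eq_LScoprime_sub hG h1 hp hd hpd x, LS_mul_prime_pow hG hp hd hpd k x]
  field_simp
  ring

end LocalFactor

def IsDiffMultiple (g l : ℕ → ℂ) : Prop :=
  ∃ τ : ℂ, ∀ k, l k = (g k - g (k + 1)) * τ

theorem forall_eq_one_or_isDiffMultiple {G : ℕ → ℂ} {p d : ℕ} (hG : IsMult G) (h1 : G 1 = 1)
    (hp : p.Prime) (hd : 0 < d) (hpd : ¬ p ∣ d) {l : ℕ → ℂ}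
    (hl : ∀ k, LTendsto G (d * p ^ k) (l k)) :
    (∀ k, G (p ^ k) = 1) ∨ IsDiffMultiple (fun k => G (p ^ k)) l := by
  have hl₀ : LTendsto G d (l 0) := by simpa using hl 0
  by_cases hgeo : ∀ k, G (p ^ (k + 1)) = G p * G (p ^ k)
  · have hlk : ∀ k, l k = G (p ^ k) * l 0 := fun k =>
      tendsto_nhds_unique (hl k) ((hl₀.const_mul _).congr fun x =>
        (LS_mul_prime_pow_of_geometric hG h1 hp hd hpd hgeo k x).symm)
    by_cases hc : G p = 1
    · left
      intro k
      induction k with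
      | zero => simpa using h1
      | succ k ih => rw [hgeo, hc, ih, one_mul]
    · right
      refine ⟨l 0 / (1 - G p), fun k => ?_⟩
      change l k = (G (p ^ k) - G (p ^ (k + 1))) * _
      rw [hlk, hgeo]
      field_simp [sub_ne_zero.2 (Ne.symm hc)]
  · right
    obtain ⟨k₀, hk₀⟩ := not_forall.1 hgeo
    obtain ⟨τ, hτ⟩ := exists_tendsto_LScoprime hG h1 hp hd hpd hk₀ hl₀ (hl k₀)
    have hτp : Tendsto (fun x => LScoprime G p d (x / p)) atTop (nhds τ) :=
      hτ.comp (tendsto_id.atTop_div_const (by exact_mod_cast hp.pos))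
    refine ⟨τ, fun k => tendsto_nhds_unique (hl k) ?_⟩
    rw [sub_mul]
    exact ((hτ.const_mul _).sub (hτp.const_mul _)).congr fun x =>
      (LS_mul_prime_pow hG hp hd hpd k x).symm

namespace IsDiffMultiple

variable {g g₁ g₂ l : ℕ → ℂ} {v : ℕ}

theorem eq_one_of_le (h : IsDiffMultiple g l) (hg : g 0 = 1) (hv : l v ≠ 0)
    (hlt : ∀ j < v, l j = 0) : ∀ j ≤ v, g j = 1 := by
  obtain ⟨τ, hτ⟩ := h
  have hτ0 : τ ≠ 0 := by
    rintro rfl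
    simp [hτ] at hv
  intro j
  induction j with
  | zero => exact fun _ => hg
  | succ j ih =>
    intro hj
    have hzero := hlt j (by omega)
    rw [hτ, ih (by omega)] at hzero
    linear_combination -(mul_eq_zero.1 hzero).resolve_right hτ0

theorem ne_one (h : IsDiffMultiple g l) (hg : g 0 = 1) (hv : l v ≠ 0)
    (hlt : ∀ j < v, l j = 0) : g (v + 1) ≠ 1 := by
  intro hv1
  have hgv := h.eq_one_of_le hg hv hlt v le_rfl
  obtain ⟨τ, hτ⟩ := h
  rw [hτ, hgv, hv1, sub_self, zero_mul] at hv
  exact hv rfl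

theorem eq_of_apply_succ_eq (h₁ : IsDiffMultiple g₁ l) (h₂ : IsDiffMultiple g₂ l)
    (hg₁ : g₁ 0 = 1) (hg₂ : g₂ 0 = 1) (hv : l v ≠ 0) (hlt : ∀ j < v, l j = 0)
    (hsucc : g₁ (v + 1) = g₂ (v + 1)) : g₁ = g₂ := by
  have hv₁ := h₁.eq_one_of_le hg₁ hv hlt v le_rfl
  have hv₂ := h₂.eq_one_of_le hg₂ hv hlt v le_rfl
  have hne := h₁.ne_one hg₁ hv hlt
  obtain ⟨τ₁, hτ₁⟩ := h₁
  obtain ⟨τ, hτ₂⟩ := h₂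
  have hτ0 : τ ≠ 0 := by
    rintro rfl
    simp [hτ₂] at hv
  -- both scales are read off from `l v = (1 - g (v + 1)) τ`
  have hτ : τ₁ = τ := by
    have h := (hτ₁ v).symm.trans (hτ₂ v)
    rw [hv₁, hv₂, ← hsucc] at h
    exact mul_left_cancel₀ (sub_ne_zero.2 (Ne.symm hne)) h
  funext k
  induction k with
  | zero => rw [hg₁, hg₂]
  | succ k ih =>
    have h := (hτ₁ k).symm.trans (hτ₂ k)
    rw [hτ, ih] at h
    linear_combination -(mul_right_cancel₀ hτ0 h)

end IsDiffMultiple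

section Transparency

variable {G : ℕ → ℂ} {p : ℕ}

theorem setOf_isSimplyTransparent_finite (hfin : {p : ℕ | p.Prime ∧ IsBad G p}.Finite) :
    {p : ℕ | IsSimplyTransparent G p}.Finite :=
  hfin.subset fun q ⟨hq, hq1, _⟩ => ⟨hq, by simp [hq1], by simpa [hq1] using hq.one_lt.le⟩

theorem trIdx_eq {v : ℕ} (hlt : ∀ K < v, G (p ^ (K + 1)) = 1) (hv : G (p ^ (v + 1)) ≠ 1) :
    trIdx G p = v := by
  rw [trIdx, ← ENat.natCast_sInf ⟨v, hv⟩, Nat.cast_inj]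
  exact le_antisymm (Nat.sInf_le hv) (le_csInf ⟨v, hv⟩ fun K hK => not_lt.1 fun h => hK (hlt K h))

theorem apply_pow_trIdx_toNat (h1 : G 1 = 1) : G (p ^ (trIdx G p).toNat) = 1 := by
  by_cases hne : ∃ K, G (p ^ (K + 1)) ≠ 1
  · rw [trIdx, ← ENat.natCast_sInf (s := {K | G (p ^ (K + 1)) ≠ 1}) hne, ENat.toNat_natCast]
    rcases Nat.eq_zero_or_eq_succ_pred (sInf {K | G (p ^ (K + 1)) ≠ 1}) with h0 | hsucc
    · rw [h0, pow_zero, h1]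
    · rw [hsucc]
      exact not_not.1 (Nat.notMem_of_lt_sInf (s := {K | G (p ^ (K + 1)) ≠ 1}) (by omega))
  · push Not at hne
    simp [trIdx, hne, h1]

theorem cmIndex_ne_top {k : ℕ} (hk : 1 ≤ k) (h : G (p ^ k) ≠ G p ^ k) : cmIndex G p ≠ ⊤ :=
  ne_top_of_le_ne_top (ENat.natCast_ne_top (k - 1)) (iSup₂_le fun w hw => by
    exact_mod_cast (show w ≤ k - 1 from not_lt.1 fun hlt => h (hw k hk (by omega))))

theorem apply_prime_pow_mul_prod_erase (hG : IsMult G) (h1 : G 1 = 1)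
    (hfin : {q : ℕ | IsSimplyTransparent G q}.Finite) (hp : p.Prime) (k : ℕ) :
    G (p ^ k * ∏ q ∈ hfin.toFinset.erase p, q ^ (trIdx G q).toNat) = G (p ^ k) := by
  have hs : ∀ q ∈ hfin.toFinset.erase p, q.Prime := fun q hq =>
    (hfin.mem_toFinset.1 (mem_of_mem_erase hq)).1
  have hcop : Nat.Coprime (p ^ k) (∏ q ∈ hfin.toFinset.erase p, q ^ (trIdx G q).toNat) :=
    Nat.Coprime.prod_right fun q hq =>
      ((Nat.coprime_primes hp (hs q hq)).2 (ne_of_mem_erase hq).symm).pow _ _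
  rw [hG _ _ (pow_pos hp.pos k) (prod_pos fun q hq => pow_pos (hs q hq).pos _) hcop,
    hG.apply_prod_prime_pow_eq_one h1 hs _ fun q _ => apply_pow_trIdx_toNat h1, mul_one]

theorem apply_prime_mul_transpCond_of_not (hG : IsMult G) (h1 : G 1 = 1)
    (hfin : {q : ℕ | IsSimplyTransparent G q}.Finite) (hp : p.Prime)
    (hnot : ¬ IsSimplyTransparent G p) :
    G (p * transpCond G) = G p := by
  have h := apply_prime_pow_mul_prod_erase hG h1 hfin hp 1
  rwa [erase_eq_of_notMem fun h => hnot (hfin.mem_toFinset.1 h),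
    ← finprod_mem_eq_finite_toFinset_prod _ hfin, pow_one] at h

theorem apply_prime_mul_transpCond_of_isSimplyTransparent (hG : IsMult G) (h1 : G 1 = 1)
    (hfin : {q : ℕ | IsSimplyTransparent G q}.Finite) (hp : p.Prime)
    (hst : IsSimplyTransparent G p) :
    G (p * transpCond G) = G (p ^ ((trIdx G p).toNat + 1)) := by
  rw [transpCond, finprod_mem_eq_finite_toFinset_prod _ hfin,
    ← mul_prod_erase _ _ (hfin.mem_toFinset.2 hst), ← mul_assoc, ← pow_succ',
    apply_prime_pow_mul_prod_erase hG h1 hfin hp]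

theorem apply_prime_mul_transpCond_of_forall_eq_one (hG : IsMult G) (h1 : G 1 = 1)
    (hfin : {q : ℕ | IsSimplyTransparent G q}.Finite) (hp : p.Prime)
    (hall : ∀ k, G (p ^ k) = 1) :
    G (p * transpCond G) = 1 := by
  by_cases hst : IsSimplyTransparent G p
  · rw [apply_prime_mul_transpCond_of_isSimplyTransparent hG h1 hfin hp hst, hall]
  · rw [apply_prime_mul_transpCond_of_not hG h1 hfin hp hst, ← pow_one p, hall]

theorem apply_prime_mul_transpCond_of_eq_one (hG : IsMult G) (h1 : G 1 = 1)
    (hfin : {q : ℕ | IsSimplyTransparent G q}.Finite) (hp : p.Prime)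
    {v : ℕ} (hv : ∀ j ≤ v, G (p ^ j) = 1)
    (hv1 : G (p ^ (v + 1)) ≠ 1) : G (p * transpCond G) = G (p ^ (v + 1)) := by
  rcases Nat.eq_zero_or_pos v with rfl | hv0
  · rw [zero_add, pow_one] at hv1 ⊢
    exact apply_prime_mul_transpCond_of_not hG h1 hfin hp fun hst => hv1 hst.2.1
  · have hp1 : G p = 1 := by simpa using hv 1 hv0
    have hst : IsSimplyTransparent G p :=
      ⟨hp, hp1, cmIndex_ne_top (k := v + 1) (by omega) (by rwa [hp1, one_pow])⟩
    rw [apply_prime_mul_transpCond_of_isSimplyTransparent hG h1 hfin hp hst,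
      trIdx_eq (fun K hK => hv (K + 1) hK) hv1, ENat.toNat_natCast]

end Transparency

theorem opacityCore_prime {G : ℕ → ℂ} {p : ℕ} (hp : p.Prime) :
    opacityCore G p = G (p * transpCond G) := by
  simp [opacityCore, mu, ArithmeticFunction.moebius_apply_prime hp]

theorem apply_prime_mul_transpCond_of_isDiffMultiple {G l : ℕ → ℂ} {p v : ℕ} (hG : IsMult G)
    (h1 : G 1 = 1) (hfin : {q : ℕ | IsSimplyTransparent G q}.Finite) (hp : p.Prime)
    (h : IsDiffMultiple (fun k => G (p ^ k)) l) (hv : l v ≠ 0) (hlt : ∀ j < v, l j = 0) :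
    G (p * transpCond G) = G (p ^ (v + 1)) ∧ G (p ^ (v + 1)) ≠ 1 := by
  have hg : G (p ^ 0) = 1 := by rw [pow_zero, h1]
  exact ⟨apply_prime_mul_transpCond_of_eq_one hG h1 hfin hp (h.eq_one_of_le hg hv hlt)
    (h.ne_one hg hv hlt), h.ne_one hg hv hlt⟩

theorem apply_prime_pow_eq {G₁ G₂ l : ℕ → ℂ} {p n₀ : ℕ} (hG₁ : IsMult G₁) (hG₂ : IsMult G₂)
    (h₁ : G₁ 1 = 1) (h₂ : G₂ 1 = 1) (hfin₁ : {q : ℕ | IsSimplyTransparent G₁ q}.Finite)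
    (hfin₂ : {q : ℕ | IsSimplyTransparent G₂ q}.Finite)
    (hl₁ : ∀ n : ℕ, 0 < n → LTendsto G₁ n (l n)) (hl₂ : ∀ n : ℕ, 0 < n → LTendsto G₂ n (l n))
    (hp : p.Prime) (hn₀ : 0 < n₀) (hln₀ : l n₀ ≠ 0)
    (hcore : G₁ (p * transpCond G₁) = G₂ (p * transpCond G₂)) (k : ℕ) :
    G₁ (p ^ k) = G₂ (p ^ k) := by
  set d := n₀ / p ^ n₀.factorization p
  have hd : 0 < d := Nat.ordCompl_pos p hn₀.ne'
  have hpd : ¬ p ∣ d := Nat.not_dvd_ordCompl hp hn₀.ne'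
  have hex : ∃ j, l (d * p ^ j) ≠ 0 :=
    ⟨_, by rwa [mul_comm, Nat.ordProj_mul_ordCompl_eq_self]⟩
  have hv := Nat.find_spec hex
  have hlt : ∀ j < Nat.find hex, l (d * p ^ j) = 0 := fun j hj => not_not.1 (Nat.find_min hex hj)
  have hpos : ∀ j, 0 < d * p ^ j := fun j => Nat.mul_pos hd (pow_pos hp.pos j)
  rcases forall_eq_one_or_isDiffMultiple hG₁ h₁ hp hd hpd fun j => hl₁ _ (hpos j)
    with hone₁ | hdiff₁ <;>
  rcases forall_eq_one_or_isDiffMultiple hG₂ h₂ hp hd hpd fun j => hl₂ _ (hpos j)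
    with hone₂ | hdiff₂
  · rw [hone₁, hone₂]
  · obtain ⟨hval₂, hne₂⟩ :=
      apply_prime_mul_transpCond_of_isDiffMultiple hG₂ h₂ hfin₂ hp hdiff₂ hv hlt
    rw [← hcore, apply_prime_mul_transpCond_of_forall_eq_one hG₁ h₁ hfin₁ hp hone₁] at hval₂
    exact absurd hval₂.symm hne₂
  · obtain ⟨hval₁, hne₁⟩ :=
      apply_prime_mul_transpCond_of_isDiffMultiple hG₁ h₁ hfin₁ hp hdiff₁ hv hlt
    rw [hcore, apply_prime_mul_transpCond_of_forall_eq_one hG₂ h₂ hfin₂ hp hone₂] at hval₁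
    exact absurd hval₁.symm hne₁
  · have hval₁ := (apply_prime_mul_transpCond_of_isDiffMultiple hG₁ h₁ hfin₁ hp hdiff₁ hv hlt).1
    have hval₂ := (apply_prime_mul_transpCond_of_isDiffMultiple hG₂ h₂ hfin₂ hp hdiff₂ hv hlt).1
    exact congrFun (hdiff₁.eq_of_apply_succ_eq hdiff₂ (by simp [h₁]) (by simp [h₂]) hv hlt
      (by rw [← hval₁, hcore, hval₂])) k

end Ramanujan

open Ramanujan in
/-- **Rigidity** (Theorem 9.3): a multiplicative Ramanujan coefficient of a non-null
function is determined by its opacity core. -/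
theorem stmt_5 (F : ℕ → ℂ) (hF : ∃ a : ℕ, 0 < a ∧ F a ≠ 0)
    (G₁ G₂ : ℕ → ℂ) (hG₁ : IsMult G₁) (hG₂ : IsMult G₂)
    (hfin₁ : {p : ℕ | p.Prime ∧ IsBad G₁ p}.Finite)
    (hfin₂ : {p : ℕ | p.Prime ∧ IsBad G₂ p}.Finite)
    (hconv₁ : ∀ a : ℕ, 0 < a → RTendsto G₁ a (F a))
    (hconv₂ : ∀ a : ℕ, 0 < a → RTendsto G₂ a (F a))
    (hcore : ∀ q : ℕ, 0 < q → opacityCore G₁ q = opacityCore G₂ q) :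
    ∀ n : ℕ, 0 < n → G₁ n = G₂ n := by
  obtain ⟨a₀, ha₀, hFa₀⟩ := hF
  obtain ⟨n₀, hn₀, hln₀⟩ : ∃ n₀ ∈ a₀.divisors, (n₀ : ℂ) * luchtLimit F n₀ ≠ 0 :=
    exists_ne_zero_of_sum_ne_zero (by rwa [sum_divisors_mul_luchtLimit F a₀ ha₀])
  have h₁ : G₁ 1 = 1 := by
    obtain ⟨q, hq, hGq⟩ := exists_apply_ne_zero_of_rTendsto (hconv₁ a₀ ha₀) hFa₀
    exact hG₁.apply_one_eq_one hq hGq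
  have h₂ : G₂ 1 = 1 := by
    obtain ⟨q, hq, hGq⟩ := exists_apply_ne_zero_of_rTendsto (hconv₂ a₀ ha₀) hFa₀
    exact hG₂.apply_one_eq_one hq hGq
  intro n hn
  refine hG₁.eq_of_forall_prime_pow hG₂ h₁ h₂ (fun p k hp => ?_) hn
  have hcore_p : G₁ (p * transpCond G₁) = G₂ (p * transpCond G₂) := by
    rw [← opacityCore_prime (G := G₁) hp, ← opacityCore_prime (G := G₂) hp, hcore p hp.pos]
  exact apply_prime_pow_eq hG₁ hG₂ h₁ h₂ (setOf_isSimplyTransparent_finite hfin₁)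
    (setOf_isSimplyTransparent_finite hfin₂) (fun n hn => lTendsto_luchtLimit hconv₁ hn)
    (fun n hn => lTendsto_luchtLimit hconv₂ hn) hp (Nat.pos_of_mem_divisors hn₀)
    (right_ne_zero_of_mul hln₀) hcore_p k
end
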